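/- arXiv:1411.4669 — 4 statements merged into one kernel-verified Lean document; each statement's English description precedes it below -/
import Mathlib

section
/- Let g : ℝ → ℝ be continuous and 1-periodic, and let σ : ℝ → ℝ be C¹ and 1-periodic. Then there exists t ∈ [0,1] with |g(t)| ≤ ( ∫₀¹ |σ'(t) − g(t)|² dt )^{1/2}; equivalently, min_{t ∈ [0,1]} |g(t)| ≤ ‖σ' − g‖_{L²(0,1)}. -/
/-! By the mean value theorem for integrals, `g` takes its mean value `∫₀¹ g` at some
`t ∈ [0,1]`. Since `σ` is periodic, `∫₀¹ σ' = 0`, so `∫₀¹ (σ' - g) = -g t`, and the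
Cauchy–Schwarz inequality `|∫₀¹ f| ≤ ‖f‖_{L²(0,1)}` applied to `f = σ' - g` gives the claim. -/

open MeasureTheory intervalIntegral Set

theorem sq_integral_le_integral_sq {Ω : Type*} [MeasurableSpace Ω] {μ : Measure Ω}
    [IsProbabilityMeasure μ] {f : Ω → ℝ} (hf : MemLp f 2 μ) :
    (∫ x, f x ∂μ) ^ 2 ≤ ∫ x, f x ^ 2 ∂μ := by
  have hvar := ProbabilityTheory.variance_nonneg f μ
  rw [ProbabilityTheory.variance_eq_sub hf] at hvar
  simpa using hvar

theorem abs_intervalIntegral_le_sqrt_integral_sq {f : ℝ → ℝ}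
    (hf : MemLp f 2 (volume.restrict (Ioc 0 1))) :
    |∫ x in (0 : ℝ)..1, f x| ≤ √(∫ x in (0 : ℝ)..1, f x ^ 2) := by
  have : IsProbabilityMeasure (volume.restrict (Ioc (0 : ℝ) 1)) := ⟨by simp⟩
  rw [integral_of_le zero_le_one, integral_of_le zero_le_one]
  exact Real.abs_le_sqrt (sq_integral_le_integral_sq hf)

theorem Continuous.memLp_two_restrict_Ioc {f : ℝ → ℝ} (hf : Continuous f) (a b : ℝ) :
    MemLp f 2 (volume.restrict (Ioc a b)) :=
  (memLp_two_iff_integrable_sq hf.aestronglyMeasurable).2 (hf.pow 2).integrableOn_Ioc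

theorem Function.Periodic.intervalIntegral_deriv_eq_zero {σ σ' : ℝ → ℝ} {T : ℝ}
    (hσ : Function.Periodic σ T) (a : ℝ)
    (hderiv : ∀ t ∈ uIcc a (a + T), HasDerivAt σ (σ' t) t)
    (hint : IntervalIntegrable σ' volume a (a + T)) : ∫ t in a..a + T, σ' t = 0 := by
  rw [integral_eq_sub_of_hasDerivAt hderiv hint, hσ a, sub_self]

theorem exists_mem_Icc_eq_intervalIntegral {g : ℝ → ℝ} (hg : ContinuousOn g (Icc 0 1)) :
    ∃ t ∈ Icc (0 : ℝ) 1, g t = ∫ s in (0 : ℝ)..1, g s := by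
  obtain ⟨t, ht, hgt⟩ := exists_eq_interval_average zero_ne_one (by simpa using hg)
  refine ⟨t, Ioo_subset_Icc_self (by simpa using ht), ?_⟩
  rw [hgt, interval_average_eq_div, sub_zero, div_one]

theorem min_abs_le_L2_norm_general
    (g σ σ' : ℝ → ℝ)
    (hg : Continuous g)
    (hσ : ∀ t, HasDerivAt σ (σ' t) t)
    (hσ' : Continuous σ')
    (hσper : ∀ t, σ (t + 1) = σ t) :
    ∃ t ∈ Set.Icc (0 : ℝ) 1,
      |g t| ≤ Real.sqrt (∫ s in (0:ℝ)..1, (σ' s - g s) ^ 2) := by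
  obtain ⟨t, ht, hmean⟩ := exists_mem_Icc_eq_intervalIntegral hg.continuousOn
  have hσ'_int : ∫ s in (0 : ℝ)..1, σ' s = 0 := by
    simpa using Function.Periodic.intervalIntegral_deriv_eq_zero (σ' := σ') hσper 0
      (fun t _ => hσ t) (by simpa using hσ'.intervalIntegrable 0 1)
  have hdiff : ∫ s in (0 : ℝ)..1, (σ' s - g s) = -g t := by
    rw [integral_sub (hσ'.intervalIntegrable 0 1) (hg.intervalIntegrable 0 1), hσ'_int, hmean,
      zero_sub]
  refine ⟨t, ht, ?_⟩
  calc |g t| = |∫ s in (0 : ℝ)..1, (σ' s - g s)| := by rw [hdiff, abs_neg]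
    _ ≤ _ := abs_intervalIntegral_le_sqrt_integral_sq ((hσ'.sub hg).memLp_two_restrict_Ioc 0 1)

/-- For a continuous 1-periodic `g` and a `C¹` 1-periodic `σ`, the minimum of `|g|`
on `[0,1]` is bounded by the `L²(0,1)` norm of `σ' − g`. -/
theorem min_abs_le_L2_norm
    (g σ σ' : ℝ → ℝ)
    (hg : Continuous g)
    (hgper : ∀ t, g (t + 1) = g t)
    (hσ : ∀ t, HasDerivAt σ (σ' t) t)
    (hσ' : Continuous σ')
    (hσper : ∀ t, σ (t + 1) = σ t) :
    ∃ t ∈ Set.Icc (0 : ℝ) 1,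
      |g t| ≤ Real.sqrt (∫ s in (0:ℝ)..1, (σ' s - g s) ^ 2) :=
  min_abs_le_L2_norm_general g σ σ' hg hσ hσ' hσper
end

section
/- Fix n ≥ 1 and let E = ℂⁿ with real inner product ⟨u,v⟩ = Re ∑ₖ uₖ·conj(vₖ) and norm ‖·‖. Let H : E → ℝ be C¹ with ‖∇H(x)‖ ≤ C_X for all x ∈ E, where C_X > 0, and let h > 0. Let x : ℝ → E and τ, σ : ℝ → ℝ be C¹ and 1-periodic, and set G := ( ∫₀¹ ‖x'(t) − τ(t)·i·∇H(x(t))‖² dt + ∫₀¹ |σ'(t) − H(x(t))|² dt + ∫₀¹ |τ'(t)|² dt )^{1/2}. If G < (h/2)·min(1/C_X, 1), then |H(x(t))| < h for all t ∈ ℝ. -/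
/-!
Write `f = H ∘ x`. Since `X_H = i ∇H` is orthogonal to `∇H` for the real inner product,
`f' = ⟪∇H(x), x'⟫ = ⟪∇H(x), x' - τ X_H(x)⟫`, so the variation of `f` over a period is at most
`C_X ‖x' - τ X_H(x)‖_{L¹} ≤ C_X G`. Periodicity of `σ` gives `∫₀¹ f = -∫₀¹ (σ' - f)`, so by
Cauchy–Schwarz the mean of `f` is at most `G` in absolute value. As `f` attains its mean,
`|f| ≤ (1 + C_X) G`, and `(1 + C_X) min (1 / C_X) 1 ≤ 2` turns this into `|f| < h`.
-/

open MeasureTheory intervalIntegral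

/-- The continuous real-linear functional `v ↦ Re ⟪y, v⟫ = Re ∑ₖ yₖ·conj(vₖ)` on
`ℂⁿ`, i.e. the real inner product with `y`. -/
noncomputable def realInnerCLM {n : ℕ} (y : EuclideanSpace ℂ (Fin n)) :
    EuclideanSpace ℂ (Fin n) →L[ℝ] ℝ :=
  Complex.reCLM.comp ((innerSL ℂ y).restrictScalars ℝ)

theorem sq_intervalIntegral_le_mul_integral_sq {u : ℝ → ℝ} (hu : Continuous u) {a b : ℝ}
    (hab : a ≤ b) : (∫ t in a..b, u t) ^ 2 ≤ (b - a) * ∫ t in a..b, u t ^ 2 := by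
  rcases hab.eq_or_lt with rfl | hlt
  · simp
  have hjensen : (⨍ t in a..b, u t) ^ 2 ≤ ⨍ t in a..b, u t ^ 2 :=
    even_two.convexOn_pow.map_set_average_le (continuous_pow 2).continuousOn isClosed_univ
      (by simp [sub_ne_zero.2 hlt.ne']) (by simp) (by simp)
      hu.integrableOn_uIoc (hu.pow 2).integrableOn_uIoc
  rw [interval_average_eq_div, interval_average_eq_div, div_pow,
    div_le_div_iff₀ (by positivity) (by linarith)] at hjensen
  nlinarith [sub_pos.2 hlt]

theorem abs_intervalIntegral_le_sqrt_mul_integral_sq {u : ℝ → ℝ} (hu : Continuous u) {a b : ℝ}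
    (hab : a ≤ b) : |∫ t in a..b, u t| ≤ √((b - a) * ∫ t in a..b, u t ^ 2) :=
  Real.abs_le_sqrt (sq_intervalIntegral_le_mul_integral_sq hu hab)

theorem abs_intervalIntegral_le_sqrt_mul_integral_sq_deriv_sub {f σ σ' : ℝ → ℝ} {a b : ℝ}
    (hab : a ≤ b) (hf : Continuous f) (hσ : ∀ t, HasDerivAt σ (σ' t) t) (hσ' : Continuous σ')
    (hσab : σ a = σ b) :
    |∫ t in a..b, f t| ≤ √((b - a) * ∫ t in a..b, (σ' t - f t) ^ 2) := by
  have hint : ∫ t in a..b, (σ' t - f t) = -∫ t in a..b, f t := by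
    rw [integral_sub (hσ'.intervalIntegrable a b) (hf.intervalIntegrable a b),
      integral_eq_sub_of_hasDerivAt (fun t _ => hσ t) (hσ'.intervalIntegrable a b), hσab,
      sub_self, zero_sub]
  rw [← abs_neg, ← hint]
  exact abs_intervalIntegral_le_sqrt_mul_integral_sq (hσ'.sub hf) hab

theorem abs_sub_le_integral_abs_deriv {f f' : ℝ → ℝ} {a b s t : ℝ}
    (hf : ∀ t, HasDerivAt f (f' t) t) (hf' : IntervalIntegrable f' volume a b)
    (hs : s ∈ Set.Icc a b) (ht : t ∈ Set.Icc a b) :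
    |f t - f s| ≤ ∫ r in a..b, |f' r| := by
  have hsub : Set.uIcc s t ⊆ Set.uIcc a b := Set.uIcc_subset_uIcc
    (Set.Icc_subset_uIcc hs) (Set.Icc_subset_uIcc ht)
  rw [← integral_eq_sub_of_hasDerivAt (fun r _ => hf r) (hf'.mono_set hsub)]
  calc |∫ r in s..t, f' r| ≤ |(∫ r in s..t, |f' r|)| := by
        simpa only [Real.norm_eq_abs] using norm_integral_le_abs_integral_norm (f := f')
    _ ≤ |(∫ r in a..b, |f' r|)| := abs_integral_mono_interval
        (Set.uIoc_subset_uIoc_of_uIcc_subset_uIcc hsub)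
        (Filter.Eventually.of_forall fun _ => abs_nonneg _) hf'.abs
    _ = ∫ r in a..b, |f' r| :=
        abs_of_nonneg (integral_nonneg (hs.1.trans hs.2) fun _ _ => abs_nonneg _)

theorem Function.Periodic.abs_le_abs_average_add_integral_abs_deriv {f f' : ℝ → ℝ} {T : ℝ}
    (hper : Function.Periodic f T) (hT : 0 < T) (hf : ∀ t, HasDerivAt f (f' t) t)
    (hf' : Continuous f') (t : ℝ) :
    |f t| ≤ |(∫ r in (0:ℝ)..T, f r) / T| + ∫ r in (0:ℝ)..T, |f' r| := by
  obtain ⟨y, hy, hfy⟩ := hper.exists_mem_Ico₀ hT t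
  have hf_cont : Continuous f := continuous_iff_continuousAt.2 fun r => (hf r).continuousAt
  obtain ⟨c, hc, hc_avg⟩ := exists_eq_interval_average hT.ne hf_cont.continuousOn
  rw [Set.uIoo_of_le hT.le] at hc
  rw [interval_average_eq_div, sub_zero] at hc_avg
  rw [hfy, ← hc_avg]
  calc |f y| ≤ |f c| + |f y - f c| := by simpa using abs_add_le (f c) (f y - f c)
    _ ≤ _ := add_le_add_right (abs_sub_le_integral_abs_deriv hf
      (hf'.intervalIntegrable 0 T) (Set.Ioo_subset_Icc_self hc) (Set.Ico_subset_Icc_self hy)) _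

theorem re_inner_sub_smul_I_smul_self {E : Type*} [NormedAddCommGroup E] [InnerProductSpace ℂ E]
    (y v : E) (c : ℝ) : (inner ℂ y (v - c • Complex.I • y)).re = (inner ℂ y v).re := by
  rw [inner_sub_right, ← Complex.coe_smul, inner_smul_right, inner_smul_right,
    inner_self_eq_norm_sq_to_K]
  simp [Complex.mul_re, ← Complex.ofReal_pow]

theorem abs_re_inner_le_norm_mul_norm_sub_smul_I_smul {E : Type*} [NormedAddCommGroup E]
    [InnerProductSpace ℂ E] (y v : E) (c : ℝ) :
    |(inner ℂ y v).re| ≤ ‖y‖ * ‖v - c • Complex.I • y‖ := by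
  rw [← re_inner_sub_smul_I_smul_self y v c]
  exact (Complex.abs_re_le_norm _).trans (norm_inner_le_norm _ _)

theorem integral_abs_re_inner_le_mul_sqrt_integral_norm_sub_smul_I_smul_sq {E : Type*}
    [NormedAddCommGroup E] [InnerProductSpace ℂ E] {y v : ℝ → E} {τ : ℝ → ℝ} {C : ℝ}
    (hy : Continuous y) (hv : Continuous v) (hτ : Continuous τ) (hyC : ∀ t, ‖y t‖ ≤ C)
    {a b : ℝ} (hab : a ≤ b) :
    ∫ t in a..b, |(inner ℂ (y t) (v t)).re|
      ≤ C * √((b - a) * ∫ t in a..b, ‖v t - τ t • Complex.I • y t‖ ^ 2) := by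
  have he : Continuous fun t => ‖v t - τ t • Complex.I • y t‖ := by fun_prop
  have hC : 0 ≤ C := (norm_nonneg _).trans (hyC 0)
  have hre : Continuous fun t => |(inner ℂ (y t) (v t)).re| :=
    (Complex.continuous_re.comp (hy.inner hv)).abs
  calc ∫ t in a..b, |(inner ℂ (y t) (v t)).re|
      ≤ ∫ t in a..b, C * ‖v t - τ t • Complex.I • y t‖ :=
        integral_mono_on hab (hre.intervalIntegrable a b)
          ((continuous_const.mul he).intervalIntegrable a b) fun t _ =>
          (abs_re_inner_le_norm_mul_norm_sub_smul_I_smul _ _ _).trans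
            (mul_le_mul_of_nonneg_right (hyC t) (norm_nonneg _))
    _ ≤ C * √((b - a) * ∫ t in a..b, ‖v t - τ t • Complex.I • y t‖ ^ 2) := by
      rw [intervalIntegral.integral_const_mul]
      gcongr
      exact (le_abs_self _).trans (abs_intervalIntegral_le_sqrt_mul_integral_sq he hab)

theorem add_mul_lt_of_le_of_lt_half_mul_min {a b C G h : ℝ} (hC : 0 < C) (hG : 0 ≤ G)
    (ha : a ≤ G) (hb : b ≤ G) (hGh : G < h / 2 * min (1 / C) 1) : a + C * b < h := by
  have hCm : C * min (1 / C) 1 ≤ 1 :=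
    (mul_le_mul_of_nonneg_left (min_le_left _ _) hC.le).trans (by field_simp; rfl)
  have hm : min (1 / C) 1 ≤ 1 := min_le_right _ _
  have hm0 : 0 < min (1 / C) 1 := lt_min (by positivity) one_pos
  have hh : 0 < h := by nlinarith
  nlinarith [mul_le_mul_of_nonneg_left hb hC.le, mul_lt_mul_of_pos_left hGh hC]

theorem small_gradient_small_H_general
    (n : ℕ)
    (H : EuclideanSpace ℂ (Fin n) → ℝ)
    (g : EuclideanSpace ℂ (Fin n) → EuclideanSpace ℂ (Fin n))
    (hH : ∀ x, HasFDerivAt H (realInnerCLM (g x)) x)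
    (hg : Continuous g)
    (C_X : ℝ) (hCX : 0 < C_X) (hgb : ∀ x, ‖g x‖ ≤ C_X)
    (h : ℝ)
    (x : ℝ → EuclideanSpace ℂ (Fin n)) (dx : ℝ → EuclideanSpace ℂ (Fin n))
    (τ σ dτ dσ : ℝ → ℝ)
    (hx : ∀ t, HasDerivAt x (dx t) t) (hdx : Continuous dx)
    (hτ : ∀ t, HasDerivAt τ (dτ t) t)
    (hσ : ∀ t, HasDerivAt σ (dσ t) t) (hdσ : Continuous dσ)
    (hxper : ∀ t, x (t + 1) = x t)
    (hσper : ∀ t, σ (t + 1) = σ t)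
    (hG : Real.sqrt
        ((∫ t in (0:ℝ)..1, ‖dx t - τ t • (Complex.I • g (x t))‖ ^ 2) +
         (∫ t in (0:ℝ)..1, (dσ t - H (x t)) ^ 2) +
         (∫ t in (0:ℝ)..1, (dτ t) ^ 2))
      < (h / 2) * min (1 / C_X) 1) :
    ∀ t, |H (x t)| < h := by
  have hxc : Continuous x := continuous_iff_continuousAt.2 fun t => (hx t).continuousAt
  have hτc : Continuous τ := continuous_iff_continuousAt.2 fun t => (hτ t).continuousAt
  have hHc : Continuous H := continuous_iff_continuousAt.2 fun y => (hH y).continuousAt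
  have hderiv : ∀ t, HasDerivAt (fun t => H (x t)) (inner ℂ (g (x t)) (dx t)).re t :=
    fun t => (hH (x t)).comp_hasDerivAt t (hx t)
  set A := ∫ t in (0:ℝ)..1, ‖dx t - τ t • (Complex.I • g (x t))‖ ^ 2
  set B := ∫ t in (0:ℝ)..1, (dσ t - H (x t)) ^ 2
  set C := ∫ t in (0:ℝ)..1, dτ t ^ 2
  have hA0 : 0 ≤ A := integral_nonneg zero_le_one fun _ _ => by positivity
  have hB0 : 0 ≤ B := integral_nonneg zero_le_one fun _ _ => by positivity
  have hC0 : 0 ≤ C := integral_nonneg zero_le_one fun _ _ => by positivity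
  have hmean : |∫ t in (0:ℝ)..1, H (x t)| ≤ √B := by
    simpa using abs_intervalIntegral_le_sqrt_mul_integral_sq_deriv_sub zero_le_one
      (hHc.comp hxc) hσ hdσ (by simpa using (hσper 0).symm)
  have hvariation : ∫ t in (0:ℝ)..1, |(inner ℂ (g (x t)) (dx t)).re| ≤ C_X * √A := by
    simpa using integral_abs_re_inner_le_mul_sqrt_integral_norm_sub_smul_I_smul_sq
      (hg.comp hxc) hdx hτc (fun t => hgb (x t)) zero_le_one
  intro t
  have hper : Function.Periodic (fun t => H (x t)) 1 := fun t => congrArg H (hxper t)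
  have hbound := hper.abs_le_abs_average_add_integral_abs_deriv one_pos hderiv (by fun_prop) t
  rw [div_one] at hbound
  exact hbound.trans_lt <| (add_le_add le_rfl hvariation).trans_lt <|
    add_mul_lt_of_le_of_lt_half_mul_min hCX (Real.sqrt_nonneg _)
      (hmean.trans (Real.sqrt_le_sqrt (by linarith))) (Real.sqrt_le_sqrt (by linarith)) hG

/-- Lemma 3.1 of the paper (flat model): a 1-periodic loop `(x,τ,σ)` at which the
gradient of the extended action functional has small `L²` norm stays within the
energy window `|H| < h`. -/
theorem small_gradient_small_H
    (n : ℕ) (hn : 1 ≤ n)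
    (H : EuclideanSpace ℂ (Fin n) → ℝ)
    (g : EuclideanSpace ℂ (Fin n) → EuclideanSpace ℂ (Fin n))
    (hH : ∀ x, HasFDerivAt H (realInnerCLM (g x)) x)
    (hg : Continuous g)
    (C_X : ℝ) (hCX : 0 < C_X) (hgb : ∀ x, ‖g x‖ ≤ C_X)
    (h : ℝ) (hh : 0 < h)
    (x : ℝ → EuclideanSpace ℂ (Fin n)) (dx : ℝ → EuclideanSpace ℂ (Fin n))
    (τ σ dτ dσ : ℝ → ℝ)
    (hx : ∀ t, HasDerivAt x (dx t) t) (hdx : Continuous dx)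
    (hτ : ∀ t, HasDerivAt τ (dτ t) t) (hdτ : Continuous dτ)
    (hσ : ∀ t, HasDerivAt σ (dσ t) t) (hdσ : Continuous dσ)
    (hxper : ∀ t, x (t + 1) = x t)
    (hτper : ∀ t, τ (t + 1) = τ t)
    (hσper : ∀ t, σ (t + 1) = σ t)
    (hG : Real.sqrt
        ((∫ t in (0:ℝ)..1, ‖dx t - τ t • (Complex.I • g (x t))‖ ^ 2) +
         (∫ t in (0:ℝ)..1, (dσ t - H (x t)) ^ 2) +
         (∫ t in (0:ℝ)..1, (dτ t) ^ 2))
      < (h / 2) * min (1 / C_X) 1) :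
    ∀ t, |H (x t)| < h :=
  small_gradient_small_H_general n H g hH hg C_X hCX hgb h x dx τ σ dτ dσ hx hdx hτ hσ hdσ hxper
    hσper hG
end

section
/- Fix n ≥ 1 and let E = ℂⁿ with real inner product ⟨u,v⟩ = Re ∑ₖ uₖ·conj(vₖ). Let H : E → ℝ be C¹ and bounded, with ‖H‖_∞ := sup_{x ∈ E} |H(x)|. Let I ⊆ ℝ be an unbounded interval, E > 0, and let ũ = (u, η, ζ) : I × ℝ → E × ℝ × ℝ be a smooth map, 1-periodic in the second variable t, which solves the flat Floer system ∂ₛu + i·∂ₜu + η·∇H(u) = 0, ∂ₛη + ∂ₜζ − H(u) = 0, ∂ₛζ − ∂ₜη = 0, and whose energy satisfies 𝔼(ũ) := ∫_I ∫₀¹ ( ‖∂ₛu‖² + |∂ₛη|² + |∂ₛζ|² ) dt ds ≤ E. Then for every s ∈ I, ( ∫₀¹ | ζ(s,t) − ζ̄(s) |² dt )^{1/2} ≤ 2·√E + ‖H‖_∞, where ζ̄(s) := ∫₀¹ ζ(s,t) dt (a quantity independent of s). -/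
/-!
Chebyshev's inequality for the energy density
`F(σ) = ∫₀¹ (‖∂ₛu‖² + |∂ₛη|² + |∂ₛζ|²) dt` on a unit interval around `s` inside `I`
(which exists because `I` is an unbounded interval) gives a slice `q` with `|s - q| ≤ 1` and
`F(q) ≤ E`. The fundamental theorem of calculus in `s`, Cauchy–Schwarz and Fubini give
`‖ζ(s,·) - ζ(q,·)‖_{L²} ≤ √E`, while on the slice `q` the Poincaré inequality and the second
Floer equation `∂ₜζ = H(u) - ∂ₛη` bound the oscillation of `ζ(q,·)` by `‖H‖_∞ + √E`.
Since subtracting the mean does not increase the `L²` norm, the triangle inequality adds up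
the two bounds.
-/

open MeasureTheory intervalIntegral

open Set Function
open scoped Interval

noncomputable def intervalL2Norm (a b : ℝ) (f : ℝ → ℝ) : ℝ :=
  √(∫ x in a..b, f x ^ 2)

section Interval

variable {a b : ℝ} {f g : ℝ → ℝ}

theorem intervalL2Norm_nonneg : 0 ≤ intervalL2Norm a b f := Real.sqrt_nonneg _

theorem intervalIntegral_mono_of_nonneg (hab : a ≤ b) (hf : ∀ x, 0 ≤ f x)
    (hg : IntervalIntegrable g volume a b) (hfg : ∀ x ∈ Ioc a b, f x ≤ g x) :
    ∫ x in a..b, f x ≤ ∫ x in a..b, g x := by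
  rw [integral_of_le hab, integral_of_le hab]
  exact integral_mono_of_nonneg (ae_of_all _ hf) hg.1
    ((ae_restrict_iff' measurableSet_Ioc).2 (ae_of_all _ hfg))

theorem sq_intervalIntegral_mul_le (hab : a ≤ b) (hf : ContinuousOn f (Icc a b))
    (hg : ContinuousOn g (Icc a b)) :
    (∫ x in a..b, f x * g x) ^ 2 ≤ (∫ x in a..b, f x ^ 2) * ∫ x in a..b, g x ^ 2 := by
  have hi : ∀ {φ : ℝ → ℝ}, ContinuousOn φ (Icc a b) → IntervalIntegrable φ volume a b :=
    fun h => h.intervalIntegrable_of_Icc hab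
  have hquad : ∀ c : ℝ, 0 ≤ (∫ x in a..b, g x ^ 2) * (c * c)
      + (-2 * ∫ x in a..b, f x * g x) * c + ∫ x in a..b, f x ^ 2 := by
    intro c
    have hexp : ∫ x in a..b, (f x - c * g x) ^ 2 = (∫ x in a..b, f x ^ 2)
        - 2 * c * (∫ x in a..b, f x * g x) + c ^ 2 * ∫ x in a..b, g x ^ 2 :=
      calc ∫ x in a..b, (f x - c * g x) ^ 2
          = ∫ x in a..b, (f x ^ 2 - 2 * c * (f x * g x) + c ^ 2 * g x ^ 2) :=
            integral_congr fun x _ => by ring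
        _ = _ := by
          rw [integral_add (hi (by fun_prop)) (hi (by fun_prop)),
            integral_sub (hi (by fun_prop)) (hi (by fun_prop)),
            intervalIntegral.integral_const_mul, intervalIntegral.integral_const_mul]
    have := integral_nonneg (μ := volume) hab fun x _ => sq_nonneg (f x - c * g x)
    linarith
  have := discrim_le_zero hquad
  rw [discrim] at this
  linarith

theorem sq_intervalIntegral_le (hab : a ≤ b) (hf : ContinuousOn f (Icc a b)) :
    (∫ x in a..b, f x) ^ 2 ≤ (b - a) * ∫ x in a..b, f x ^ 2 := by
  simpa [mul_comm] using sq_intervalIntegral_mul_le hab hf continuousOn_const (g := 1)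

theorem sq_sub_le_mul_integral_deriv_sq (hab : a ≤ b) (hf : ∀ x ∈ Icc a b, HasDerivAt f (g x) x)
    (hg : ContinuousOn g (Icc a b)) :
    (f b - f a) ^ 2 ≤ (b - a) * ∫ x in a..b, g x ^ 2 := by
  rw [← integral_eq_sub_of_hasDerivAt (by rwa [uIcc_of_le hab])
    (hg.intervalIntegrable_of_Icc hab)]
  exact sq_intervalIntegral_le hab hg

theorem intervalL2Norm_add_le (hab : a ≤ b) (hf : ContinuousOn f (Icc a b))
    (hg : ContinuousOn g (Icc a b)) :
    intervalL2Norm a b (fun x => f x + g x) ≤ intervalL2Norm a b f + intervalL2Norm a b g := by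
  have hi : ∀ {φ : ℝ → ℝ}, ContinuousOn φ (Icc a b) → IntervalIntegrable φ volume a b :=
    fun h => h.intervalIntegrable_of_Icc hab
  have hf2 := integral_nonneg (μ := volume) hab fun x _ => sq_nonneg (f x)
  have hg2 := integral_nonneg (μ := volume) hab fun x _ => sq_nonneg (g x)
  have hfg : ∫ x in a..b, f x * g x ≤ √(∫ x in a..b, f x ^ 2) * √(∫ x in a..b, g x ^ 2) := by
    rw [← Real.sqrt_mul hf2]
    exact Real.le_sqrt_of_sq_le (sq_intervalIntegral_mul_le hab hf hg)
  have hexp : ∫ x in a..b, (f x + g x) ^ 2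
      = (∫ x in a..b, f x ^ 2) + 2 * (∫ x in a..b, f x * g x) + ∫ x in a..b, g x ^ 2 :=
    calc ∫ x in a..b, (f x + g x) ^ 2
        = ∫ x in a..b, (f x ^ 2 + 2 * (f x * g x) + g x ^ 2) :=
          integral_congr fun x _ => by ring
      _ = _ := by
        rw [integral_add (hi (by fun_prop)) (hi (by fun_prop)),
          integral_add (hi (by fun_prop)) (hi (by fun_prop)),
          intervalIntegral.integral_const_mul]
  refine Real.sqrt_le_iff.2 ⟨add_nonneg intervalL2Norm_nonneg intervalL2Norm_nonneg, ?_⟩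
  rw [hexp, add_sq, intervalL2Norm, intervalL2Norm, Real.sq_sqrt hf2, Real.sq_sqrt hg2]
  linarith

theorem intervalL2Norm_sub_le (hab : a ≤ b) (hf : ContinuousOn f (Icc a b))
    (hg : ContinuousOn g (Icc a b)) :
    intervalL2Norm a b (fun x => f x - g x) ≤ intervalL2Norm a b f + intervalL2Norm a b g := by
  simpa only [sub_eq_add_neg, intervalL2Norm, neg_sq] using
    intervalL2Norm_add_le hab hf (g := fun x => -g x) hg.neg

theorem intervalL2Norm_le_of_abs_le {C : ℝ} (hC : 0 ≤ C) (hf : ∀ x ∈ Ι a b, |f x| ≤ C) :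
    intervalL2Norm a b f ≤ √|b - a| * C := by
  have hf2 : ∀ x ∈ Ι a b, ‖f x ^ 2‖ ≤ C ^ 2 := fun x hx => by
    rw [Real.norm_eq_abs, abs_pow]
    exact pow_le_pow_left₀ (abs_nonneg _) (hf x hx) 2
  calc intervalL2Norm a b f ≤ √(C ^ 2 * |b - a|) :=
        Real.sqrt_le_sqrt ((le_abs_self _).trans (norm_integral_le_of_norm_le_const hf2))
    _ = √|b - a| * C := by rw [Real.sqrt_mul (sq_nonneg C), Real.sqrt_sq hC, mul_comm]

theorem integral_sq_le_integral_norm_sq_add_sq_add_sq {V : Type*} [NormedAddCommGroup V]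
    {v : ℝ → V} (hab : a ≤ b) (hv : Continuous v) (hf : Continuous f) (hg : Continuous g) :
    (∫ t in a..b, f t ^ 2 ≤ ∫ t in a..b, (‖v t‖ ^ 2 + f t ^ 2 + g t ^ 2)) ∧
      ∫ t in a..b, g t ^ 2 ≤ ∫ t in a..b, (‖v t‖ ^ 2 + f t ^ 2 + g t ^ 2) := by
  have hi : IntervalIntegrable (fun t => ‖v t‖ ^ 2 + f t ^ 2 + g t ^ 2) volume a b :=
    (by fun_prop : Continuous _).intervalIntegrable a b
  constructor <;> refine intervalIntegral_mono_of_nonneg hab (fun t => sq_nonneg _) hi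
    fun t _ => by nlinarith [sq_nonneg ‖v t‖, sq_nonneg (f t), sq_nonneg (g t)]

end Interval

section UnitInterval

variable {f g : ℝ → ℝ}

theorem integral_sub_const_sq (hf : ContinuousOn f (Icc 0 1)) (c : ℝ) :
    ∫ t in (0:ℝ)..1, (f t - c) ^ 2
      = (∫ t in (0:ℝ)..1, f t ^ 2) - 2 * c * (∫ t in (0:ℝ)..1, f t) + c ^ 2 := by
  have hi : ∀ {φ : ℝ → ℝ}, ContinuousOn φ (Icc 0 1) → IntervalIntegrable φ volume 0 1 :=
    fun h => h.intervalIntegrable_of_Icc zero_le_one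
  calc ∫ t in (0:ℝ)..1, (f t - c) ^ 2 = ∫ t in (0:ℝ)..1, (f t ^ 2 - 2 * c * f t + c ^ 2) :=
        integral_congr fun t _ => by ring
    _ = _ := by
      rw [integral_add (hi (by fun_prop)) intervalIntegrable_const,
        integral_sub (hi (by fun_prop)) (hi (by fun_prop)),
        intervalIntegral.integral_const_mul]
      simp

theorem intervalL2Norm_sub_integral_le (hf : ContinuousOn f (Icc 0 1)) (c : ℝ) :
    intervalL2Norm 0 1 (fun t => f t - ∫ t' in (0:ℝ)..1, f t')
      ≤ intervalL2Norm 0 1 (fun t => f t - c) := by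
  refine Real.sqrt_le_sqrt ?_
  rw [integral_sub_const_sq hf, integral_sub_const_sq hf]
  nlinarith [sq_nonneg (c - ∫ t in (0:ℝ)..1, f t)]

theorem intervalL2Norm_sub_integral_le_add (hf : ContinuousOn f (Icc 0 1))
    (hg : ContinuousOn g (Icc 0 1)) :
    intervalL2Norm 0 1 (fun t => f t - ∫ t' in (0:ℝ)..1, f t')
      ≤ intervalL2Norm 0 1 (fun t => f t - g t)
        + intervalL2Norm 0 1 (fun t => g t - ∫ t' in (0:ℝ)..1, g t') := by
  set mf := ∫ t' in (0:ℝ)..1, f t'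
  set mg := ∫ t' in (0:ℝ)..1, g t'
  have hmean : ∫ t in (0:ℝ)..1, (f t - g t) = mf - mg :=
    integral_sub (hf.intervalIntegrable_of_Icc zero_le_one)
      (hg.intervalIntegrable_of_Icc zero_le_one)
  calc intervalL2Norm 0 1 (fun t => f t - mf)
      = intervalL2Norm 0 1 (fun t => (f t - g t - (mf - mg)) + (g t - mg)) := by
        congr 1; ext t; ring
    _ ≤ intervalL2Norm 0 1 (fun t => f t - g t - (mf - mg))
        + intervalL2Norm 0 1 (fun t => g t - mg) :=
        intervalL2Norm_add_le zero_le_one (by fun_prop) (by fun_prop)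
    _ ≤ _ := by
      gcongr
      simpa [hmean] using intervalL2Norm_sub_integral_le (hf.sub hg) 0

/-- Comparing with `f 0` instead of the mean gives the constant `1` without periodicity. -/
theorem intervalL2Norm_sub_integral_le_of_hasDerivAt
    (hf : ∀ t ∈ Icc (0:ℝ) 1, HasDerivAt f (g t) t) (hg : ContinuousOn g (Icc 0 1)) :
    intervalL2Norm 0 1 (fun t => f t - ∫ t' in (0:ℝ)..1, f t') ≤ intervalL2Norm 0 1 g := by
  have hfc : ContinuousOn f (Icc 0 1) := fun t ht => (hf t ht).continuousAt.continuousWithinAt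
  have hpt : ∀ t ∈ Icc (0:ℝ) 1, (f t - f 0) ^ 2 ≤ ∫ x in (0:ℝ)..1, g x ^ 2 := by
    intro t ht
    have hsub : Icc 0 t ⊆ Icc 0 1 := Icc_subset_Icc_right ht.2
    calc (f t - f 0) ^ 2 ≤ (t - 0) * ∫ x in (0:ℝ)..t, g x ^ 2 :=
          sq_sub_le_mul_integral_deriv_sq ht.1 (fun x hx => hf x (hsub hx)) (hg.mono hsub)
      _ ≤ 1 * ∫ x in (0:ℝ)..1, g x ^ 2 :=
          mul_le_mul (by linarith [ht.2])
            (integral_mono_interval le_rfl ht.1 ht.2 (ae_of_all _ fun x => sq_nonneg _)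
              ((hg.pow 2).intervalIntegrable_of_Icc zero_le_one))
            (integral_nonneg ht.1 fun x _ => sq_nonneg _) zero_le_one
      _ = _ := one_mul _
  refine (intervalL2Norm_sub_integral_le hfc (f 0)).trans (Real.sqrt_le_sqrt ?_)
  calc ∫ t in (0:ℝ)..1, (f t - f 0) ^ 2 ≤ ∫ _ in (0:ℝ)..1, ∫ x in (0:ℝ)..1, g x ^ 2 :=
        integral_mono_on zero_le_one
          (((hfc.sub continuousOn_const).pow 2).intervalIntegrable_of_Icc zero_le_one)
          intervalIntegrable_const hpt
    _ = _ := by simp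

theorem intervalL2Norm_sub_integral_le_of_hasDerivAt_add_eq {ψ h : ℝ → ℝ} {C E : ℝ}
    (hf : ∀ t ∈ Icc (0:ℝ) 1, HasDerivAt f (g t) t) (hg : Continuous g) (hψ : Continuous ψ)
    (heq : ∀ t, ψ t + g t - h t = 0) (hh : ∀ t, |h t| ≤ C)
    (hψE : ∫ t in (0:ℝ)..1, ψ t ^ 2 ≤ E) :
    intervalL2Norm 0 1 (fun t => f t - ∫ t' in (0:ℝ)..1, f t') ≤ C + √E := by
  have hhc : Continuous h :=
    (hψ.add hg).congr fun t => by simp only [Pi.add_apply]; linarith [heq t]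
  calc intervalL2Norm 0 1 (fun t => f t - ∫ t' in (0:ℝ)..1, f t')
      ≤ intervalL2Norm 0 1 g := intervalL2Norm_sub_integral_le_of_hasDerivAt hf hg.continuousOn
    _ = intervalL2Norm 0 1 (fun t => h t - ψ t) := by congr 1; ext t; linarith [heq t]
    _ ≤ intervalL2Norm 0 1 h + intervalL2Norm 0 1 ψ :=
        intervalL2Norm_sub_le zero_le_one hhc.continuousOn hψ.continuousOn
    _ ≤ C + √E := by
        refine add_le_add ?_ (Real.sqrt_le_sqrt hψE)
        simpa using intervalL2Norm_le_of_abs_le (a := 0) (b := 1)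
          ((abs_nonneg _).trans (hh 0)) fun t _ => hh t

end UnitInterval

theorem ContinuousOn.continuous_slice {α β γ : Type*} [TopologicalSpace α] [TopologicalSpace β]
    [TopologicalSpace γ] {X : α → β → γ} {I : Set α}
    (hX : ContinuousOn (fun p : α × β => X p.1 p.2) (I ×ˢ univ)) {σ : α} (hσ : σ ∈ I) :
    Continuous (X σ) :=
  hX.comp_continuous (Continuous.prodMk_right σ) fun _ => ⟨hσ, trivial⟩

theorem intervalIntegral_sq_sub_le_of_hasDerivAt_fst {ζ ζs : ℝ → ℝ → ℝ} {a b c d : ℝ}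
    (hcd : c ≤ d) (hζs : ∀ σ ∈ uIcc a b, ∀ t ∈ Icc c d, HasDerivAt (ζ · t) (ζs σ t) σ)
    (hζsc : ContinuousOn (uncurry ζs) (uIcc a b ×ˢ Icc c d)) :
    ∫ t in c..d, (ζ b t - ζ a t) ^ 2 ≤ |b - a| * ∫ σ in Ι a b, ∫ t in c..d, ζs σ t ^ 2 := by
  wlog hab : a ≤ b generalizing a b
  · have := this (uIcc_comm a b ▸ hζs) (uIcc_comm a b ▸ hζsc) (le_of_not_ge hab)
    rw [uIoc_comm, abs_sub_comm]
    exact (le_of_eq (integral_congr fun t _ => by ring)).trans this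
  rw [uIcc_of_le hab] at hζs hζsc
  have hint : IntegrableOn (uncurry fun σ t => ζs σ t ^ 2) (Ι a b ×ˢ Ι c d) := by
    rw [uIoc_of_le hab, uIoc_of_le hcd]
    exact ((hζsc.pow 2).integrableOn_compact (isCompact_Icc.prod isCompact_Icc)).mono_set
      (prod_mono Ioc_subset_Icc_self Ioc_subset_Icc_self)
  have hint_slice : IntervalIntegrable (fun t => ∫ σ in a..b, ζs σ t ^ 2) volume c d := by
    rw [IntegrableOn, Measure.volume_eq_prod, ← Measure.prod_restrict] at hint
    simpa [intervalIntegrable_iff, integral_of_le hab, uIoc_of_le hab, IntegrableOn] using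
      hint.integral_prod_right
  rw [abs_of_nonneg (sub_nonneg.2 hab), uIoc_of_le hab, ← integral_of_le hab,
    intervalIntegral_intervalIntegral_swap hint, ← intervalIntegral.integral_const_mul]
  refine intervalIntegral_mono_of_nonneg hcd (fun t => sq_nonneg _) (hint_slice.const_mul _)
    fun t ht => sq_sub_le_mul_integral_deriv_sq hab
      (fun σ hσ => hζs σ hσ t (Ioc_subset_Icc_self ht)) ?_
  exact hζsc.comp (Continuous.prodMk_left t).continuousOn
    fun σ hσ => ⟨hσ, Ioc_subset_Icc_self ht⟩

theorem intervalL2Norm_sub_le_sqrt_of_hasDerivAt_fst {ζ ζs : ℝ → ℝ → ℝ} {F : ℝ → ℝ}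
    {a b E : ℝ} (hab : |b - a| ≤ 1) (hζs : ∀ σ ∈ uIcc a b, ∀ t, HasDerivAt (ζ · t) (ζs σ t) σ)
    (hζsc : ContinuousOn (uncurry ζs) (uIcc a b ×ˢ univ)) (hF : IntegrableOn F (Ι a b))
    (hζsF : ∀ σ ∈ Ι a b, ∫ t in (0:ℝ)..1, ζs σ t ^ 2 ≤ F σ) (hFE : ∫ σ in Ι a b, F σ ≤ E) :
    intervalL2Norm 0 1 (fun t => ζ b t - ζ a t) ≤ √E := by
  have hG0 : 0 ≤ ∫ σ in Ι a b, ∫ t in (0:ℝ)..1, ζs σ t ^ 2 :=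
    setIntegral_nonneg measurableSet_uIoc fun σ _ =>
      integral_nonneg zero_le_one fun t _ => sq_nonneg _
  refine Real.sqrt_le_sqrt ?_
  calc ∫ t in (0:ℝ)..1, (ζ b t - ζ a t) ^ 2
      ≤ |b - a| * ∫ σ in Ι a b, ∫ t in (0:ℝ)..1, ζs σ t ^ 2 :=
        intervalIntegral_sq_sub_le_of_hasDerivAt_fst zero_le_one (fun σ hσ t _ => hζs σ hσ t)
          (hζsc.mono (prod_mono subset_rfl (subset_univ _)))
    _ ≤ ∫ σ in Ι a b, ∫ t in (0:ℝ)..1, ζs σ t ^ 2 := mul_le_of_le_one_left hG0 hab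
    _ ≤ ∫ σ in Ι a b, F σ :=
        integral_mono_of_nonneg
          (ae_of_all _ fun σ => integral_nonneg zero_le_one fun t _ => sq_nonneg _) hF
          ((ae_restrict_iff' measurableSet_uIoc).2 (ae_of_all _ hζsF))
    _ ≤ E := hFE

theorem Set.OrdConnected.exists_Icc_add_one_subset {I : Set ℝ} (hI : I.OrdConnected)
    (hunb : ¬Bornology.IsBounded I) {s : ℝ} (hs : s ∈ I) :
    ∃ a, s ∈ Icc a (a + 1) ∧ Icc a (a + 1) ⊆ I := by
  rw [isBounded_iff_bddBelow_bddAbove, not_and_or] at hunb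
  rcases hunb with hbelow | habove
  · obtain ⟨x, hxI, hx⟩ := not_bddBelow_iff.1 hbelow (s - 1)
    exact ⟨s - 1, ⟨by linarith, by linarith⟩,
      (Icc_subset_Icc hx.le (by linarith)).trans (hI.out hxI hs)⟩
  · obtain ⟨x, hxI, hx⟩ := not_bddAbove_iff.1 habove (s + 1)
    exact ⟨s, ⟨le_rfl, by linarith⟩, (Icc_subset_Icc le_rfl hx.le).trans (hI.out hs hxI)⟩

theorem exists_mem_Ioc_le_setIntegral {F : ℝ → ℝ} {a : ℝ}
    (hF : IntegrableOn F (Ioc a (a + 1))) :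
    ∃ σ ∈ Ioc a (a + 1), F σ ≤ ∫ x in Ioc a (a + 1), F x := by
  have hvol : volume (Ioc a (a + 1)) = 1 := by simp
  simpa [setAverage_eq, hvol] using exists_le_setAverage (by simp [hvol]) (by simp [hvol]) hF

theorem exists_uIcc_subset_abs_sub_le_one_le {I : Set ℝ} {F : ℝ → ℝ} {s E : ℝ}
    (hI : I.OrdConnected) (hunb : ¬Bornology.IsBounded I) (hs : s ∈ I) (hF : IntegrableOn F I)
    (hF0 : ∀ σ ∈ I, 0 ≤ F σ) (hE : ∫ σ in I, F σ ≤ E) :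
    ∃ q, uIcc q s ⊆ I ∧ |s - q| ≤ 1 ∧ F q ≤ E := by
  obtain ⟨a, hsa, haI⟩ := hI.exists_Icc_add_one_subset hunb hs
  have hIoc : Ioc a (a + 1) ⊆ I := Ioc_subset_Icc_self.trans haI
  obtain ⟨q, hq, hFq⟩ := exists_mem_Ioc_le_setIntegral (hF.mono_set hIoc)
  refine ⟨q, (uIcc_subset_Icc (Ioc_subset_Icc_self hq) hsa).trans haI,
    abs_sub_le_iff.2 ⟨by linarith [hq.1, hsa.2], by linarith [hq.2, hsa.1]⟩, ?_⟩
  calc F q ≤ ∫ x in Ioc a (a + 1), F x := hFq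
    _ ≤ ∫ σ in I, F σ :=
        setIntegral_mono_set hF (ae_restrict_of_forall_mem hI.measurableSet hF0)
          hIoc.eventuallyLE
    _ ≤ E := hE

theorem zeta_oscillation_bound_general
    (n : ℕ)
    (H : EuclideanSpace ℂ (Fin n) → ℝ)
    (Hinf : ℝ) (hHb : ∀ x, |H x| ≤ Hinf)
    (I : Set ℝ) (hIint : I.OrdConnected) (hIunb : ¬ Bornology.IsBounded I)
    (Ebound : ℝ)
    (u : ℝ → ℝ → EuclideanSpace ℂ (Fin n))
    (us : ℝ → ℝ → EuclideanSpace ℂ (Fin n))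
    (ζ ηs ζs ζt : ℝ → ℝ → ℝ)
    -- partial derivatives
    (hζs : ∀ s ∈ I, ∀ t, HasDerivAt (fun s' => ζ s' t) (ζs s t) s)
    (hζt : ∀ s ∈ I, ∀ t, HasDerivAt (fun t' => ζ s t') (ζt s t) t)
    -- smoothness of the derivative fields
    (husc : ContinuousOn (fun p : ℝ × ℝ => us p.1 p.2) (I ×ˢ Set.univ))
    (hηsc : ContinuousOn (fun p : ℝ × ℝ => ηs p.1 p.2) (I ×ˢ Set.univ))
    (hζsc : ContinuousOn (fun p : ℝ × ℝ => ζs p.1 p.2) (I ×ˢ Set.univ))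
    (hζtc : ContinuousOn (fun p : ℝ × ℝ => ζt p.1 p.2) (I ×ˢ Set.univ))
    -- the flat Floer system
    (heq2 : ∀ s ∈ I, ∀ t, ηs s t + ζt s t - H (u s t) = 0)
    -- finite energy, bounded by Ebound
    (hEint : IntegrableOn
      (fun s => ∫ t in (0:ℝ)..1, (‖us s t‖ ^ 2 + (ηs s t) ^ 2 + (ζs s t) ^ 2)) I)
    (hEn : (∫ s in I, ∫ t in (0:ℝ)..1,
        (‖us s t‖ ^ 2 + (ηs s t) ^ 2 + (ζs s t) ^ 2)) ≤ Ebound) :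
    ∀ s ∈ I,
      Real.sqrt (∫ t in (0:ℝ)..1, (ζ s t - ∫ t' in (0:ℝ)..1, ζ s t') ^ 2)
        ≤ 2 * Real.sqrt Ebound + Hinf := by
  intro s hs
  set F : ℝ → ℝ := fun σ => ∫ t in (0:ℝ)..1, (‖us σ t‖ ^ 2 + ηs σ t ^ 2 + ζs σ t ^ 2)
  have hF0 : ∀ σ, 0 ≤ F σ := fun σ => integral_nonneg zero_le_one fun t _ => by positivity
  have hslice : ∀ σ ∈ I,
      ∫ t in (0:ℝ)..1, ηs σ t ^ 2 ≤ F σ ∧ ∫ t in (0:ℝ)..1, ζs σ t ^ 2 ≤ F σ :=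
    fun σ hσ => integral_sq_le_integral_norm_sq_add_sq_add_sq zero_le_one
      (husc.continuous_slice hσ) (hηsc.continuous_slice hσ) (hζsc.continuous_slice hσ)
  obtain ⟨q, hqs, hsq, hFq⟩ :=
    exists_uIcc_subset_abs_sub_le_one_le hIint hIunb hs hEint (fun σ _ => hF0 σ) hEn
  have hq : q ∈ I := hqs left_mem_uIcc
  have hJ : Ι q s ⊆ I := uIoc_subset_uIcc.trans hqs
  have hζc : ∀ σ ∈ I, ContinuousOn (ζ σ) (Icc 0 1) := fun σ hσ t _ =>
    (hζt σ hσ t).continuousAt.continuousWithinAt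
  have hdiff : intervalL2Norm 0 1 (fun t => ζ s t - ζ q t) ≤ √Ebound :=
    intervalL2Norm_sub_le_sqrt_of_hasDerivAt_fst hsq (fun σ hσ t => hζs σ (hqs hσ) t)
      (hζsc.mono (prod_mono hqs subset_rfl)) (hEint.mono_set hJ)
      (fun σ hσ => (hslice σ (hJ hσ)).2)
      ((setIntegral_mono_set hEint (ae_of_all _ hF0) hJ.eventuallyLE).trans hEn)
  have hoscq : intervalL2Norm 0 1 (fun t => ζ q t - ∫ t' in (0:ℝ)..1, ζ q t')
      ≤ Hinf + √Ebound :=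
    intervalL2Norm_sub_integral_le_of_hasDerivAt_add_eq (fun t _ => hζt q hq t)
      (hζtc.continuous_slice hq) (hηsc.continuous_slice hq) (heq2 q hq) (fun t => hHb (u q t))
      ((hslice q hq).1.trans hFq)
  calc _ ≤ _ + _ := intervalL2Norm_sub_integral_le_add (hζc s hs) (hζc q hq)
    _ ≤ √Ebound + (Hinf + √Ebound) := add_le_add hdiff hoscq
    _ = 2 * √Ebound + Hinf := by ring

/-- Lemma 3.3 of the paper (flat model): a uniform `L²` bound on the oscillation of
the `ζ`-component of a finite-energy solution of the flat Floer system on an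
unbounded interval `I`: for every `s ∈ I`,
`‖ζ(s,·) − ζ̄(s)‖_{L²(0,1)} ≤ 2√E + ‖H‖_∞`. -/
theorem zeta_oscillation_bound
    (n : ℕ) (hn : 1 ≤ n)
    (H : EuclideanSpace ℂ (Fin n) → ℝ)
    (g : EuclideanSpace ℂ (Fin n) → EuclideanSpace ℂ (Fin n))
    (hH : ∀ x, HasFDerivAt H (realInnerCLM (g x)) x)
    (hg : Continuous g)
    (Hinf : ℝ) (hHb : ∀ x, |H x| ≤ Hinf)
    (I : Set ℝ) (hIint : I.OrdConnected) (hIunb : ¬ Bornology.IsBounded I)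
    (Ebound : ℝ) (hE : 0 < Ebound)
    (u : ℝ → ℝ → EuclideanSpace ℂ (Fin n))
    (us ut : ℝ → ℝ → EuclideanSpace ℂ (Fin n))
    (η ζ ηs ηt ζs ζt : ℝ → ℝ → ℝ)
    -- partial derivatives
    (hus : ∀ s ∈ I, ∀ t, HasDerivAt (fun s' => u s' t) (us s t) s)
    (hut : ∀ s ∈ I, ∀ t, HasDerivAt (fun t' => u s t') (ut s t) t)
    (hηs : ∀ s ∈ I, ∀ t, HasDerivAt (fun s' => η s' t) (ηs s t) s)
    (hηt : ∀ s ∈ I, ∀ t, HasDerivAt (fun t' => η s t') (ηt s t) t)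
    (hζs : ∀ s ∈ I, ∀ t, HasDerivAt (fun s' => ζ s' t) (ζs s t) s)
    (hζt : ∀ s ∈ I, ∀ t, HasDerivAt (fun t' => ζ s t') (ζt s t) t)
    -- smoothness of the derivative fields
    (husc : ContinuousOn (fun p : ℝ × ℝ => us p.1 p.2) (I ×ˢ Set.univ))
    (hηsc : ContinuousOn (fun p : ℝ × ℝ => ηs p.1 p.2) (I ×ˢ Set.univ))
    (hζsc : ContinuousOn (fun p : ℝ × ℝ => ζs p.1 p.2) (I ×ˢ Set.univ))
    (hζtc : ContinuousOn (fun p : ℝ × ℝ => ζt p.1 p.2) (I ×ˢ Set.univ))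
    -- 1-periodicity in t
    (huper : ∀ s t, u s (t + 1) = u s t)
    (hηper : ∀ s t, η s (t + 1) = η s t)
    (hζper : ∀ s t, ζ s (t + 1) = ζ s t)
    -- the flat Floer system
    (heq1 : ∀ s ∈ I, ∀ t, us s t + Complex.I • ut s t + η s t • g (u s t) = 0)
    (heq2 : ∀ s ∈ I, ∀ t, ηs s t + ζt s t - H (u s t) = 0)
    (heq3 : ∀ s ∈ I, ∀ t, ζs s t - ηt s t = 0)
    -- finite energy, bounded by Ebound
    (hEint : IntegrableOn
      (fun s => ∫ t in (0:ℝ)..1, (‖us s t‖ ^ 2 + (ηs s t) ^ 2 + (ζs s t) ^ 2)) I)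
    (hEn : (∫ s in I, ∫ t in (0:ℝ)..1,
        (‖us s t‖ ^ 2 + (ηs s t) ^ 2 + (ζs s t) ^ 2)) ≤ Ebound) :
    ∀ s ∈ I,
      Real.sqrt (∫ t in (0:ℝ)..1, (ζ s t - ∫ t' in (0:ℝ)..1, ζ s t') ^ 2)
        ≤ 2 * Real.sqrt Ebound + Hinf :=
  zeta_oscillation_bound_general n H Hinf hHb I hIint hIunb Ebound u us ζ ηs ζs ζt hζs hζt husc hηsc
    hζsc hζtc heq2 hEint hEn
end

section
/- Fix n ≥ 1 and let E = ℂⁿ with real inner product ⟨u,v⟩ = Re ∑ₖ uₖ·conj(vₖ). Let H : E → ℝ be C¹, let I ⊆ ℝ be an unbounded interval, let E > 0, ε > 0, L ≥ 0, and let ũ = (u, η, ζ) : I × ℝ → E × ℝ × ℝ be a smooth map, 1-periodic in the second variable t, solving the flat Floer system ∂ₛu + i·∂ₜu + η·∇H(u) = 0, ∂ₛη + ∂ₜζ − H(u) = 0, ∂ₛζ − ∂ₜη = 0, with energy 𝔼(ũ) := ∫_I ∫₀¹ (‖∂ₛu‖² + |∂ₛη|² + |∂ₛζ|²) dt ds ≤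 E. Assume that for every s ∈ I with ∫₀¹ ( ‖∂ₛu(s,t)‖² + |∂ₛη(s,t)|² + |∂ₛζ(s,t)|² ) dt < ε² one has ( ∫₀¹ η(s,t)² dt )^{1/2} ≤ L. Then for every s ∈ I, ( ∫₀¹ η(s,t)² dt )^{1/2} ≤ L + E/ε. -/
/-!
Fix `s ∈ I` and `r > E / ε²`. As `I` is an unbounded interval, it contains an interval `J` of
length `r` with `s ∈ J`. The energy on `J` is at most `E < r ε²`, so by Chebyshev some `s' ∈ J`
has `‖∇𝔸(ũ(s'))‖ < ε`, whence `‖η(s', ·)‖ ≤ L`. The fundamental theorem of calculus and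
Cauchy–Schwarz in `s` give `‖η(s, ·) - η(s', ·)‖² ≤ r ∫_J ∫₀¹ |∂ₛη|² ≤ r E`, so by Minkowski
`‖η(s, ·)‖ ≤ L + √(r E)`; now let `r ↓ E / ε²`.
-/

open MeasureTheory intervalIntegral

open Set Filter Topology

section CauchySchwarz

variable {a b : ℝ} {p q : ℝ → ℝ}

lemma intervalIntegral_add_sq (hab : a ≤ b) (hp : ContinuousOn p (Icc a b))
    (hq : ContinuousOn q (Icc a b)) :
    ∫ t in a..b, (p t + q t) ^ 2
      = (∫ t in a..b, p t ^ 2) + 2 * (∫ t in a..b, p t * q t) + ∫ t in a..b, q t ^ 2 := by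
  have hpp : IntervalIntegrable (fun t => p t ^ 2) volume a b :=
    (hp.pow 2).intervalIntegrable_of_Icc hab
  have hpq : IntervalIntegrable (fun t => p t * q t) volume a b :=
    (hp.mul hq).intervalIntegrable_of_Icc hab
  have hqq : IntervalIntegrable (fun t => q t ^ 2) volume a b :=
    (hq.pow 2).intervalIntegrable_of_Icc hab
  simp only [add_sq, mul_assoc]
  rw [integral_add (hpp.add (hpq.const_mul 2)) hqq, integral_add hpp (hpq.const_mul 2),
    intervalIntegral.integral_const_mul]

lemma sq_intervalIntegral_mul_le_s8 (hab : a ≤ b) (hp : ContinuousOn p (Icc a b))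
    (hq : ContinuousOn q (Icc a b)) :
    (∫ t in a..b, p t * q t) ^ 2 ≤ (∫ t in a..b, p t ^ 2) * ∫ t in a..b, q t ^ 2 := by
  -- `x ↦ ∫ (x p + q)²` is a nonnegative quadratic, so its discriminant is nonpositive
  have hquad : ∀ x : ℝ, 0 ≤ (∫ t in a..b, p t ^ 2) * (x * x)
      + (2 * ∫ t in a..b, p t * q t) * x + ∫ t in a..b, q t ^ 2 := by
    intro x
    have h := intervalIntegral_add_sq (p := fun t => x * p t) hab (continuousOn_const.mul hp) hq
    simp only [mul_pow, mul_assoc, intervalIntegral.integral_const_mul] at h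
    linarith [integral_nonneg (μ := volume) hab fun t _ => sq_nonneg (x * p t + q t)]
  have h := discrim_le_zero hquad
  rw [discrim] at h
  linarith

lemma sqrt_intervalIntegral_add_sq_le (hab : a ≤ b) (hp : ContinuousOn p (Icc a b))
    (hq : ContinuousOn q (Icc a b)) :
    √(∫ t in a..b, (p t + q t) ^ 2) ≤ √(∫ t in a..b, p t ^ 2) + √(∫ t in a..b, q t ^ 2) := by
  have hA := integral_nonneg (μ := volume) hab fun t _ => sq_nonneg (p t)
  have hB := integral_nonneg (μ := volume) hab fun t _ => sq_nonneg (q t)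
  have hcs : ∫ t in a..b, p t * q t ≤ √(∫ t in a..b, p t ^ 2) * √(∫ t in a..b, q t ^ 2) := by
    rw [← Real.sqrt_mul hA]
    exact Real.le_sqrt_of_sq_le (sq_intervalIntegral_mul_le_s8 hab hp hq)
  rw [Real.sqrt_le_iff, intervalIntegral_add_sq hab hp hq]
  refine ⟨by positivity, ?_⟩
  nlinarith [Real.sq_sqrt hA, Real.sq_sqrt hB]

end CauchySchwarz

lemma sq_sub_le_mul_intervalIntegral_deriv_sq {a b : ℝ} {F F' : ℝ → ℝ}
    (hF : ∀ σ ∈ Icc a b, HasDerivAt F (F' σ) σ) (hF' : ContinuousOn F' (Icc a b))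
    {x y : ℝ} (hx : x ∈ Icc a b) (hy : y ∈ Icc a b) :
    (F y - F x) ^ 2 ≤ (b - a) * ∫ σ in a..b, F' σ ^ 2 := by
  wlog hxy : x ≤ y generalizing x y
  · rw [← neg_sub, neg_sq]
    exact this hy hx (le_of_not_ge hxy)
  have hsub : Icc x y ⊆ Icc a b := Icc_subset_Icc hx.1 hy.2
  have hftc : F y - F x = ∫ σ in x..y, F' σ * 1 := by
    simp only [mul_one]
    refine (integral_eq_sub_of_hasDerivAt (fun σ hσ => hF σ (hsub ?_))
      ((hF'.mono hsub).intervalIntegrable_of_Icc hxy)).symm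
    rwa [uIcc_of_le hxy] at hσ
  have hab : a ≤ b := hx.1.trans hx.2
  calc (F y - F x) ^ 2
      ≤ (∫ σ in x..y, F' σ ^ 2) * ∫ σ in x..y, (1 : ℝ) ^ 2 := by
        rw [hftc]; exact sq_intervalIntegral_mul_le_s8 hxy (hF'.mono hsub) continuousOn_const
    _ = (y - x) * ∫ σ in x..y, F' σ ^ 2 := by simp [mul_comm]
    _ ≤ (b - a) * ∫ σ in a..b, F' σ ^ 2 := by
        refine mul_le_mul (by linarith [hx.1, hy.2]) ?_
          (integral_nonneg hxy fun σ _ => sq_nonneg _) (by linarith)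
        exact integral_mono_interval hx.1 hxy hy.2 (ae_of_all _ fun σ => sq_nonneg _)
          ((hF'.pow 2).intervalIntegrable_of_Icc hab)

lemma integrable_restrict_prod_of_continuousOn {a b c d : ℝ} {F : ℝ → ℝ → ℝ}
    (hF : ContinuousOn (Function.uncurry F) (Icc a b ×ˢ Icc c d)) :
    Integrable (Function.uncurry F)
      ((volume.restrict (Ioc a b)).prod (volume.restrict (Ioc c d))) := by
  rw [Measure.prod_restrict, ← Measure.volume_eq_prod]
  exact (hF.integrableOn_compact (isCompact_Icc.prod isCompact_Icc)).mono_set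
    (prod_mono Ioc_subset_Icc_self Ioc_subset_Icc_self)

lemma intervalIntegral_sq_sub_le_mul_integral_deriv_sq {a b c d : ℝ} {η ηs : ℝ → ℝ → ℝ}
    (hcd : c ≤ d)
    (hη : ∀ σ ∈ Icc a b, ∀ t ∈ Icc c d, HasDerivAt (η · t) (ηs σ t) σ)
    (hηs : ContinuousOn (Function.uncurry ηs) (Icc a b ×ˢ Icc c d))
    {x y : ℝ} (hx : x ∈ Icc a b) (hy : y ∈ Icc a b) :
    ∫ t in c..d, (η y t - η x t) ^ 2 ≤ (b - a) * ∫ σ in a..b, ∫ t in c..d, ηs σ t ^ 2 := by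
  have hab : a ≤ b := hx.1.trans hx.2
  have hsq : ContinuousOn (Function.uncurry fun σ t => ηs σ t ^ 2) (Icc a b ×ˢ Icc c d) :=
    hηs.pow 2
  have hint := integrable_restrict_prod_of_continuousOn hsq
  have hslice : ∀ t ∈ Icc c d, ContinuousOn (ηs · t) (Icc a b) := fun t ht =>
    hηs.comp (continuous_id.prodMk continuous_const).continuousOn fun σ hσ => ⟨hσ, ht⟩
  calc ∫ t in c..d, (η y t - η x t) ^ 2
      ≤ ∫ t in c..d, (b - a) * ∫ σ in a..b, ηs σ t ^ 2 := by
        simp only [integral_of_le hcd, integral_of_le hab]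
        refine integral_mono_of_nonneg (ae_of_all _ fun t => sq_nonneg _)
          (hint.integral_prod_right.const_mul _) ?_
        refine (ae_restrict_mem measurableSet_Ioc).mono fun t ht => ?_
        simpa only [integral_of_le hab] using sq_sub_le_mul_intervalIntegral_deriv_sq
          (fun σ hσ => hη σ hσ t (Ioc_subset_Icc_self ht)) (hslice t (Ioc_subset_Icc_self ht)) hx hy
    _ = (b - a) * ∫ σ in a..b, ∫ t in c..d, ηs σ t ^ 2 := by
        rw [intervalIntegral.integral_const_mul]
        simp only [integral_of_le hcd, integral_of_le hab]
        rw [integral_integral_swap hint]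

lemma exists_lt_of_setIntegral_lt {α : Type*} [MeasurableSpace α] {μ : Measure α} {s : Set α}
    {f : α → ℝ} {c : ℝ} (hμ : μ s ≠ ⊤) (hf : IntegrableOn f s μ)
    (h : ∫ x in s, f x ∂μ < μ.real s * c) : ∃ x ∈ s, f x < c := by
  have hμ0 : μ s ≠ 0 := by
    intro h0
    simp [Measure.restrict_eq_zero.2 h0, measureReal_def, h0] at h
  obtain ⟨x, hx, hle⟩ := exists_le_setAverage hμ0 hμ hf
  have hpos : 0 < μ.real s := ENNReal.toReal_pos hμ0 hμ
  refine ⟨x, hx, hle.trans_lt ?_⟩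
  rw [setAverage_eq, smul_eq_mul, inv_mul_lt_iff₀ hpos]
  exact h

lemma Set.OrdConnected.exists_Icc_subset {I : Set ℝ} (hI : I.OrdConnected)
    (hIunb : ¬ Bornology.IsBounded I) {s : ℝ} (hs : s ∈ I) {r : ℝ} (hr : 0 ≤ r) :
    ∃ a, s ∈ Icc a (a + r) ∧ Icc a (a + r) ⊆ I := by
  obtain ⟨s₁, hs₁, hfar⟩ : ∃ s₁ ∈ I, r < |s₁ - s| := by
    by_contra! hnear
    exact hIunb (Metric.isBounded_closedBall (x := s) (r := r) |>.subset fun x hx => hnear x hx)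
  rcases lt_abs.1 hfar with hfar | hfar
  · exact ⟨s, ⟨le_rfl, by linarith⟩, (Icc_subset_Icc_right (by linarith)).trans (hI.out hs hs₁)⟩
  · refine ⟨s - r, ⟨by linarith, by linarith⟩, ?_⟩
    rw [sub_add_cancel]
    exact (Icc_subset_Icc_left (by linarith)).trans (hI.out hs₁ hs)

section Propagation

variable {I : Set ℝ} {η ηs : ℝ → ℝ → ℝ} {f : ℝ → ℝ} {E ε L : ℝ}

lemma sqrt_integral_sq_le_add_sqrt_mul (hI : I.OrdConnected) (hIunb : ¬ Bornology.IsBounded I)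
    (hηs : ∀ s ∈ I, ∀ t, HasDerivAt (η · t) (ηs s t) s)
    (hηsc : ContinuousOn (Function.uncurry ηs) (I ×ˢ univ)) (hη : ∀ s ∈ I, Continuous (η s))
    (hf : ∀ s ∈ I, ∫ t in (0 : ℝ)..1, ηs s t ^ 2 ≤ f s) (hfint : IntegrableOn f I)
    (hfE : ∫ s in I, f s ≤ E) (hε : 0 < ε)
    (hthresh : ∀ s ∈ I, f s < ε ^ 2 → √(∫ t in (0 : ℝ)..1, η s t ^ 2) ≤ L)
    {r : ℝ} (hr : E / ε ^ 2 < r) {s : ℝ} (hs : s ∈ I) :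
    √(∫ t in (0 : ℝ)..1, η s t ^ 2) ≤ L + √(r * E) := by
  have hf0 : ∀ s ∈ I, 0 ≤ f s := fun s hs =>
    (integral_nonneg zero_le_one fun t _ => sq_nonneg (ηs s t)).trans (hf s hs)
  have hE : 0 ≤ E := (setIntegral_nonneg hI.measurableSet hf0).trans hfE
  have hr0 : 0 < r := (div_nonneg hE (sq_nonneg ε)).trans_lt hr
  obtain ⟨a, hsa, hsub⟩ := hI.exists_Icc_subset hIunb hs hr0.le
  have henergy : ∫ σ in Ioc a (a + r), f σ ≤ E :=
    (setIntegral_mono_set hfint ((ae_restrict_mem hI.measurableSet).mono hf0)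
      (Ioc_subset_Icc_self.trans hsub).eventuallyLE).trans hfE
  obtain ⟨s', hs', hfs'⟩ : ∃ s' ∈ Ioc a (a + r), f s' < ε ^ 2 := by
    refine exists_lt_of_setIntegral_lt measure_Ioc_lt_top.ne
      (hfint.mono_set (Ioc_subset_Icc_self.trans hsub)) (henergy.trans_lt ?_)
    rwa [Real.volume_real_Ioc, add_sub_cancel_left, max_eq_left hr0.le,
      ← div_lt_iff₀ (by positivity)]
  have hs'I := hsub (Ioc_subset_Icc_self hs')
  have hdist : ∫ t in (0 : ℝ)..1, (η s t - η s' t) ^ 2 ≤ r * E := by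
    calc ∫ t in (0 : ℝ)..1, (η s t - η s' t) ^ 2
        ≤ (a + r - a) * ∫ σ in a..a + r, ∫ t in (0 : ℝ)..1, ηs σ t ^ 2 :=
          intervalIntegral_sq_sub_le_mul_integral_deriv_sq zero_le_one
            (fun σ hσ t _ => hηs σ (hsub hσ) t) (hηsc.mono (prod_mono hsub (subset_univ _)))
            (Ioc_subset_Icc_self hs') hsa
      _ ≤ r * E := by
        rw [add_sub_cancel_left, integral_of_le (by linarith)]
        refine mul_le_mul_of_nonneg_left (le_trans ?_ henergy) hr0.le
        exact integral_mono_of_nonneg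
          (ae_of_all _ fun σ => integral_nonneg zero_le_one fun t _ => sq_nonneg _)
          (hfint.mono_set (Ioc_subset_Icc_self.trans hsub))
          ((ae_restrict_mem measurableSet_Ioc).mono fun σ hσ =>
            hf σ (hsub (Ioc_subset_Icc_self hσ)))
  calc √(∫ t in (0 : ℝ)..1, η s t ^ 2)
      = √(∫ t in (0 : ℝ)..1, (η s' t + (η s t - η s' t)) ^ 2) := by simp only [add_sub_cancel]
    _ ≤ √(∫ t in (0 : ℝ)..1, η s' t ^ 2) + √(∫ t in (0 : ℝ)..1, (η s t - η s' t) ^ 2) :=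
        sqrt_intervalIntegral_add_sq_le zero_le_one (hη s' hs'I).continuousOn
          ((hη s hs).sub (hη s' hs'I)).continuousOn
    _ ≤ L + √(r * E) := add_le_add (hthresh s' hs'I hfs') (Real.sqrt_le_sqrt hdist)

lemma sqrt_integral_sq_le_add_div (hI : I.OrdConnected) (hIunb : ¬ Bornology.IsBounded I)
    (hηs : ∀ s ∈ I, ∀ t, HasDerivAt (η · t) (ηs s t) s)
    (hηsc : ContinuousOn (Function.uncurry ηs) (I ×ˢ univ)) (hη : ∀ s ∈ I, Continuous (η s))
    (hf : ∀ s ∈ I, ∫ t in (0 : ℝ)..1, ηs s t ^ 2 ≤ f s) (hfint : IntegrableOn f I)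
    (hfE : ∫ s in I, f s ≤ E) (hε : 0 < ε)
    (hthresh : ∀ s ∈ I, f s < ε ^ 2 → √(∫ t in (0 : ℝ)..1, η s t ^ 2) ≤ L)
    {s : ℝ} (hs : s ∈ I) :
    √(∫ t in (0 : ℝ)..1, η s t ^ 2) ≤ L + E / ε := by
  have hE : 0 ≤ E := (setIntegral_nonneg hI.measurableSet fun s hs =>
    (integral_nonneg zero_le_one fun t _ => sq_nonneg (ηs s t)).trans (hf s hs)).trans hfE
  have hlim : Tendsto (fun r => L + √(r * E)) (𝓝[>] (E / ε ^ 2)) (𝓝 (L + E / ε)) := by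
    have hval : √(E / ε ^ 2 * E) = E / ε := by
      rw [show E / ε ^ 2 * E = (E / ε) ^ 2 by ring, Real.sqrt_sq (by positivity)]
    rw [← hval]
    exact (Continuous.tendsto (by fun_prop) _).mono_left nhdsWithin_le_nhds
  exact ge_of_tendsto hlim (eventually_nhdsWithin_of_forall fun r hr =>
    sqrt_integral_sq_le_add_sqrt_mul hI hIunb hηs hηsc hη hf hfint hfE hε hthresh hr hs)

end Propagation

theorem eta_bound_propagates_general
    (n : ℕ)
    (I : Set ℝ) (hIint : I.OrdConnected) (hIunb : ¬ Bornology.IsBounded I)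
    (Ebound : ℝ) (ε : ℝ) (hε : 0 < ε) (L : ℝ)
    (us : ℝ → ℝ → EuclideanSpace ℂ (Fin n))
    (η ηs ηt ζs : ℝ → ℝ → ℝ)
    -- partial derivatives
    (hηs : ∀ s ∈ I, ∀ t, HasDerivAt (fun s' => η s' t) (ηs s t) s)
    (hηt : ∀ s ∈ I, ∀ t, HasDerivAt (fun t' => η s t') (ηt s t) t)
    -- smoothness of the derivative fields
    (husc : ContinuousOn (fun p : ℝ × ℝ => us p.1 p.2) (I ×ˢ Set.univ))
    (hηsc : ContinuousOn (fun p : ℝ × ℝ => ηs p.1 p.2) (I ×ˢ Set.univ))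
    (hζsc : ContinuousOn (fun p : ℝ × ℝ => ζs p.1 p.2) (I ×ˢ Set.univ))
    -- finite energy, bounded by Ebound
    (hEint : IntegrableOn
      (fun s => ∫ t in (0:ℝ)..1, (‖us s t‖ ^ 2 + (ηs s t) ^ 2 + (ζs s t) ^ 2)) I)
    (hEn : (∫ s in I, ∫ t in (0:ℝ)..1,
        (‖us s t‖ ^ 2 + (ηs s t) ^ 2 + (ζs s t) ^ 2)) ≤ Ebound)
    -- the bound L at loops with small gradient
    (hthresh : ∀ s ∈ I,
      (∫ t in (0:ℝ)..1, (‖us s t‖ ^ 2 + (ηs s t) ^ 2 + (ζs s t) ^ 2)) < ε ^ 2 →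
      Real.sqrt (∫ t in (0:ℝ)..1, (η s t) ^ 2) ≤ L) :
    ∀ s ∈ I, Real.sqrt (∫ t in (0:ℝ)..1, (η s t) ^ 2) ≤ L + Ebound / ε := by
  have hη : ∀ s ∈ I, Continuous (η s) := fun s hs =>
    continuous_iff_continuousAt.2 fun t => (hηt s hs t).continuousAt
  have hf : ∀ s ∈ I, ∫ t in (0 : ℝ)..1, ηs s t ^ 2
      ≤ ∫ t in (0:ℝ)..1, (‖us s t‖ ^ 2 + (ηs s t) ^ 2 + (ζs s t) ^ 2) := by
    intro s hs
    have hslice {X : Type} [TopologicalSpace X] {F : ℝ → ℝ → X}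
        (hF : ContinuousOn (Function.uncurry F) (I ×ˢ univ)) : Continuous (F s) :=
      hF.comp_continuous (Continuous.prodMk_right s) fun _ => ⟨hs, trivial⟩
    refine integral_mono_on zero_le_one (((hslice hηsc).pow 2).intervalIntegrable 0 1)
      (((((hslice husc).norm.pow 2).add ((hslice hηsc).pow 2)).add
        ((hslice hζsc).pow 2)).intervalIntegrable 0 1) fun t _ => ?_
    linarith [sq_nonneg ‖us s t‖, sq_nonneg (ζs s t)]
  exact fun s hs => sqrt_integral_sq_le_add_div hIint hIunb hηs hηsc hη hf hEint hEn hε hthresh hs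

/-- Lemma 3.4 of the paper (flat model, with an explicit quantitative threshold):
if the `L²(𝕋)` bound `‖η(s,·)‖ ≤ L` holds at every `s ∈ I` where the action
gradient is smaller than `ε`, then `‖η(s,·)‖ ≤ L + E/ε` holds for every `s ∈ I`. -/
theorem eta_bound_propagates
    (n : ℕ) (hn : 1 ≤ n)
    (H : EuclideanSpace ℂ (Fin n) → ℝ)
    (g : EuclideanSpace ℂ (Fin n) → EuclideanSpace ℂ (Fin n))
    (hH : ∀ x, HasFDerivAt H (realInnerCLM (g x)) x)
    (hg : Continuous g)
    (I : Set ℝ) (hIint : I.OrdConnected) (hIunb : ¬ Bornology.IsBounded I)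
    (Ebound : ℝ) (hE : 0 < Ebound) (ε : ℝ) (hε : 0 < ε) (L : ℝ) (hL : 0 ≤ L)
    (u : ℝ → ℝ → EuclideanSpace ℂ (Fin n))
    (us ut : ℝ → ℝ → EuclideanSpace ℂ (Fin n))
    (η ζ ηs ηt ζs ζt : ℝ → ℝ → ℝ)
    -- partial derivatives
    (hus : ∀ s ∈ I, ∀ t, HasDerivAt (fun s' => u s' t) (us s t) s)
    (hut : ∀ s ∈ I, ∀ t, HasDerivAt (fun t' => u s t') (ut s t) t)
    (hηs : ∀ s ∈ I, ∀ t, HasDerivAt (fun s' => η s' t) (ηs s t) s)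
    (hηt : ∀ s ∈ I, ∀ t, HasDerivAt (fun t' => η s t') (ηt s t) t)
    (hζs : ∀ s ∈ I, ∀ t, HasDerivAt (fun s' => ζ s' t) (ζs s t) s)
    (hζt : ∀ s ∈ I, ∀ t, HasDerivAt (fun t' => ζ s t') (ζt s t) t)
    -- smoothness of the derivative fields
    (husc : ContinuousOn (fun p : ℝ × ℝ => us p.1 p.2) (I ×ˢ Set.univ))
    (hηsc : ContinuousOn (fun p : ℝ × ℝ => ηs p.1 p.2) (I ×ˢ Set.univ))
    (hζsc : ContinuousOn (fun p : ℝ × ℝ => ζs p.1 p.2) (I ×ˢ Set.univ))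
    -- 1-periodicity in t
    (huper : ∀ s t, u s (t + 1) = u s t)
    (hηper : ∀ s t, η s (t + 1) = η s t)
    (hζper : ∀ s t, ζ s (t + 1) = ζ s t)
    -- the flat Floer system
    (heq1 : ∀ s ∈ I, ∀ t, us s t + Complex.I • ut s t + η s t • g (u s t) = 0)
    (heq2 : ∀ s ∈ I, ∀ t, ηs s t + ζt s t - H (u s t) = 0)
    (heq3 : ∀ s ∈ I, ∀ t, ζs s t - ηt s t = 0)
    -- finite energy, bounded by Ebound
    (hEint : IntegrableOn
      (fun s => ∫ t in (0:ℝ)..1, (‖us s t‖ ^ 2 + (ηs s t) ^ 2 + (ζs s t) ^ 2)) I)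
    (hEn : (∫ s in I, ∫ t in (0:ℝ)..1,
        (‖us s t‖ ^ 2 + (ηs s t) ^ 2 + (ζs s t) ^ 2)) ≤ Ebound)
    -- the bound L at loops with small gradient
    (hthresh : ∀ s ∈ I,
      (∫ t in (0:ℝ)..1, (‖us s t‖ ^ 2 + (ηs s t) ^ 2 + (ζs s t) ^ 2)) < ε ^ 2 →
      Real.sqrt (∫ t in (0:ℝ)..1, (η s t) ^ 2) ≤ L) :
    ∀ s ∈ I, Real.sqrt (∫ t in (0:ℝ)..1, (η s t) ^ 2) ≤ L + Ebound / ε :=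
  eta_bound_propagates_general n I hIint hIunb Ebound ε hε L us η ηs ηt ζs hηs hηt husc hηsc hζsc
    hEint hEn hthresh
end
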